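/- arXiv:0902.0176 — 15 statements merged into one kernel-verified Lean document; each statement's English description precedes it below -/
import Mathlib

section
/- Let a, b be real numbers, n a natural number, and v a real number with |v| < 1; set γ = 1/√(1 − v²). If φ : ℝ² → ℝ is twice continuously differentiable and satisfies φ(φ_xx − φ_tt) − a(φ_x² − φ_t²) + bφ^(n+1) = 0 everywhere, then the Lorentz-transformed function ψ(x,t) = φ(γ(x − v t), γ(t − v x)) satisfies the same equation ψ(ψ_xx − ψ_tt) − a(ψ_x² − ψ_t²) + bψ^(n+1) = 0 everywhere. -/
/-!
In the boosted frame the `x`- and `t`-derivatives of `ψ` are derivatives of `φ` in the directions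
`u = γ (1, -v)` and `w = γ (-v, 1)`. For a linear form `A` and a bilinear form `B` on `ℝ²`,
`A u ² - A w ²` and `B u u - B w w` are `γ² (1 - v²) = 1` times the same expressions in the
standard directions, so each term of the equation is unchanged.
-/

theorem ContinuousLinearMap.map_prodMk_eq_smul_add_smul {M : Type*} [NormedAddCommGroup M]
    [NormedSpace ℝ M] (T : ℝ × ℝ →L[ℝ] M) (α β : ℝ) :
    T (α, β) = α • T (1, 0) + β • T (0, 1) := by
  rw [← map_smul, ← map_smul, ← map_add]
  simp

section Hyperbolic

variable (α β : ℝ)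

theorem sq_apply_sub_sq_apply_swap (A : ℝ × ℝ →L[ℝ] ℝ) :
    A (α, β) ^ 2 - A (β, α) ^ 2 = (α ^ 2 - β ^ 2) * (A (1, 0) ^ 2 - A (0, 1) ^ 2) := by
  rw [A.map_prodMk_eq_smul_add_smul α β, A.map_prodMk_eq_smul_add_smul β α]
  simp only [smul_eq_mul]
  ring

theorem apply_apply_sub_apply_apply_swap (B : ℝ × ℝ →L[ℝ] ℝ × ℝ →L[ℝ] ℝ) :
    B (α, β) (α, β) - B (β, α) (β, α)
      = (α ^ 2 - β ^ 2) * (B (1, 0) (1, 0) - B (0, 1) (0, 1)) := by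
  rw [B.map_prodMk_eq_smul_add_smul α β, B.map_prodMk_eq_smul_add_smul β α]
  simp only [add_apply, smul_apply]
  rw [(B (1, 0)).map_prodMk_eq_smul_add_smul α β, (B (0, 1)).map_prodMk_eq_smul_add_smul α β,
    (B (1, 0)).map_prodMk_eq_smul_add_smul β α, (B (0, 1)).map_prodMk_eq_smul_add_smul β α]
  simp only [smul_eq_mul]
  ring

end Hyperbolic

section AlongLine

variable {E : Type*} [NormedAddCommGroup E] [NormedSpace ℝ E] {F : E → ℝ} {c : ℝ → E} {u : E}

theorem deriv_comp_eq_fderiv_apply (hF : Differentiable ℝ F) (hc : ∀ s, HasDerivAt c u s)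
    (s : ℝ) : deriv (fun r => F (c r)) s = fderiv ℝ F (c s) u :=
  ((hF (c s)).hasFDerivAt.comp_hasDerivAt s (hc s)).deriv

theorem deriv_deriv_comp_eq_fderiv_fderiv_apply (hF : ContDiff ℝ 2 F)
    (hc : ∀ s, HasDerivAt c u s) (s : ℝ) :
    deriv (deriv fun r => F (c r)) s = fderiv ℝ (fderiv ℝ F) (c s) u u := by
  rw [funext (deriv_comp_eq_fderiv_apply (hF.differentiable two_ne_zero) hc)]
  have hF' : Differentiable ℝ (fderiv ℝ F) :=
    (hF.fderiv_right (m := 1) le_rfl).differentiable one_ne_zero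
  have hDF : HasDerivAt (fun r => fderiv ℝ F (c r)) (fderiv ℝ (fderiv ℝ F) (c s) u) s :=
    (hF' (c s)).hasFDerivAt.comp_hasDerivAt s (hc s)
  exact ((ContinuousLinearMap.apply ℝ ℝ u).hasFDerivAt.comp_hasDerivAt s hDF).deriv

end AlongLine

/-- The left-hand side of the equation at `p`, with `e` and `f` in place of the `x`- and
`t`-directions. -/
noncomputable def solitonExpr (a b : ℝ) (n : ℕ) (F : ℝ × ℝ → ℝ) (p e f : ℝ × ℝ) : ℝ :=
  F p * (fderiv ℝ (fderiv ℝ F) p e e - fderiv ℝ (fderiv ℝ F) p f f)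
    - a * (fderiv ℝ F p e ^ 2 - fderiv ℝ F p f ^ 2) + b * F p ^ (n + 1)

section Soliton

variable {a b : ℝ} {n : ℕ} {F : ℝ × ℝ → ℝ}

theorem solitonExpr_swap_eq {α β : ℝ} (h : α ^ 2 - β ^ 2 = 1) (p : ℝ × ℝ) :
    solitonExpr a b n F p (α, β) (β, α) = solitonExpr a b n F p (1, 0) (0, 1) := by
  rw [solitonExpr, solitonExpr, apply_apply_sub_apply_apply_swap, sq_apply_sub_sq_apply_swap, h,
    one_mul, one_mul]

theorem solitonExpr_eq_of_hasDerivAt (hF : ContDiff ℝ 2 F) {c d : ℝ → ℝ × ℝ} {e f : ℝ × ℝ}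
    (hc : ∀ s, HasDerivAt c e s) (hd : ∀ r, HasDerivAt d f r) {s r : ℝ} (hcd : c s = d r) :
    F (c s) * (deriv (deriv fun r => F (c r)) s - deriv (deriv fun r => F (d r)) r)
      - a * (deriv (fun r => F (c r)) s ^ 2 - deriv (fun r => F (d r)) r ^ 2)
      + b * F (c s) ^ (n + 1) = solitonExpr a b n F (c s) e f := by
  rw [deriv_deriv_comp_eq_fderiv_fderiv_apply hF hc, deriv_deriv_comp_eq_fderiv_fderiv_apply hF hd,
    deriv_comp_eq_fderiv_apply (hF.differentiable two_ne_zero) hc,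
    deriv_comp_eq_fderiv_apply (hF.differentiable two_ne_zero) hd, hcd, solitonExpr]

end Soliton

section Boost

variable (γ v : ℝ)

theorem hasDerivAt_boost_fst (t s : ℝ) :
    HasDerivAt (fun r => (γ * (r - v * t), γ * (t - v * r))) (γ, -(γ * v)) s := by
  refine HasDerivAt.prodMk ?_ ?_
  · simpa using ((hasDerivAt_id s).sub_const (v * t)).const_mul γ
  · simpa using (((hasDerivAt_id s).const_mul v).const_sub t).const_mul γ

theorem hasDerivAt_boost_snd (x s : ℝ) :
    HasDerivAt (fun r => (γ * (x - v * r), γ * (r - v * x))) (-(γ * v), γ) s := by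
  refine HasDerivAt.prodMk ?_ ?_
  · simpa using (((hasDerivAt_id s).const_mul v).const_sub x).const_mul γ
  · simpa using ((hasDerivAt_id s).sub_const (v * x)).const_mul γ

theorem lorentz_factor_sq_sub_sq {γ v : ℝ} (hv : |v| < 1) (hγ : γ = 1 / Real.sqrt (1 - v ^ 2)) :
    γ ^ 2 - (-(γ * v)) ^ 2 = 1 := by
  have hv2 : 0 < 1 - v ^ 2 := sub_pos.mpr (sq_lt_one_iff_abs_lt_one v |>.mpr hv)
  have hγv : γ ^ 2 * (1 - v ^ 2) = 1 := by
    rw [hγ, div_pow, one_pow, Real.sq_sqrt hv2.le, one_div_mul_cancel hv2.ne']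
  linear_combination hγv

end Boost

/-- the soliton PDE is Lorentz invariant. -/
theorem stmt_1 (a b v : ℝ) (n : ℕ) (hv : |v| < 1) (γ : ℝ)
    (hγ : γ = 1 / Real.sqrt (1 - v ^ 2))
    (φ : ℝ → ℝ → ℝ) (hφ : ContDiff ℝ 2 (fun p : ℝ × ℝ => φ p.1 p.2))
    (hpde : ∀ x t : ℝ,
      φ x t *
        (deriv (fun x' => deriv (fun x'' => φ x'' t) x') x
          - deriv (fun t' => deriv (fun t'' => φ x t'') t') t)
      - a * ((deriv (fun x' => φ x' t) x) ^ 2 - (deriv (fun t' => φ x t') t) ^ 2)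
      + b * (φ x t) ^ (n + 1) = 0) :
    ∀ x t : ℝ,
      φ (γ * (x - v * t)) (γ * (t - v * x)) *
        (deriv (fun x' => deriv
            (fun x'' => φ (γ * (x'' - v * t)) (γ * (t - v * x''))) x') x
          - deriv (fun t' => deriv
            (fun t'' => φ (γ * (x - v * t'')) (γ * (t'' - v * x))) t') t)
      - a * ((deriv (fun x' => φ (γ * (x' - v * t)) (γ * (t - v * x'))) x) ^ 2
          - (deriv (fun t' => φ (γ * (x - v * t')) (γ * (t' - v * x))) t) ^ 2)
      + b * (φ (γ * (x - v * t)) (γ * (t - v * x))) ^ (n + 1) = 0 := by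
  intro x t
  have hstandard : ∀ p, solitonExpr a b n (fun p : ℝ × ℝ => φ p.1 p.2) p (1, 0) (0, 1) = 0 :=
    fun p => (solitonExpr_eq_of_hasDerivAt hφ (c := fun r => (r, p.2)) (d := fun r => (p.1, r))
      (fun s => (hasDerivAt_id s).prodMk (hasDerivAt_const s p.2))
      (fun r => (hasDerivAt_const r p.1).prodMk (hasDerivAt_id r)) rfl).symm.trans
      (hpde p.1 p.2)
  refine (solitonExpr_eq_of_hasDerivAt hφ (hasDerivAt_boost_fst γ v t)
    (hasDerivAt_boost_snd γ v x) rfl).trans ?_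
  rw [solitonExpr_swap_eq (lorentz_factor_sq_sub_sq hv hγ)]
  exact hstandard _
end

section
/- Let a, b, n, p be real numbers with p ≠ 0, and let y : ℝ → ℝ be twice differentiable with y(η) > 0 for all η. If y satisfies y·y'' − (a p − p + 1)(y')² + (b/p)·y^(p(n−1)+2) = 0 (real powers), then φ = y^p satisfies φ·φ'' − a(φ')² + b·φ^(n+1) = 0, where all powers are real powers of positive reals. -/
/-- the substitution `φ = y^p` preserves the form of the ODE. -/
theorem stmt_2 (a b n p : ℝ) (hp : p ≠ 0)
    (y : ℝ → ℝ) (hy : Differentiable ℝ y) (hy' : Differentiable ℝ (deriv y))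
    (hpos : ∀ η : ℝ, 0 < y η)
    (hode : ∀ η : ℝ,
      y η * deriv (deriv y) η - (a * p - p + 1) * (deriv y η) ^ 2
        + (b / p) * (y η) ^ (p * (n - 1) + 2) = 0) :
    ∀ η : ℝ,
      (fun η => (y η) ^ p) η * deriv (deriv (fun η => (y η) ^ p)) η
        - a * (deriv (fun η => (y η) ^ p) η) ^ 2
        + b * ((fun η => (y η) ^ p) η) ^ (n + 1) = 0 := by
  intro η
  have hY : ∀ x, HasDerivAt y (deriv y x) x := fun x => (hy x).hasDerivAt
  have hd1 : ∀ x, HasDerivAt (fun t => y t ^ p) (deriv y x * p * y x ^ (p - 1)) x :=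
    fun x => (hY x).rpow_const (Or.inl (hpos x).ne')
  have hderiv1 : deriv (fun t => y t ^ p) = fun x => deriv y x * p * y x ^ (p - 1) :=
    funext fun x => (hd1 x).deriv
  have hd2 : HasDerivAt (fun x => deriv y x * p * y x ^ (p - 1))
      (deriv (deriv y) η * p * (y η ^ (p - 1))
        + deriv y η * p * (deriv y η * (p - 1) * y η ^ (p - 1 - 1))) η :=
    (((hy' η).hasDerivAt).mul_const p).mul ((hY η).rpow_const (Or.inl (hpos η).ne'))
  have hderiv2 : deriv (deriv (fun t => y t ^ p)) η
      = deriv (deriv y) η * p * (y η ^ (p - 1))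
        + deriv y η * p * (deriv y η * (p - 1) * y η ^ (p - 1 - 1)) := by
    rw [hderiv1]; exact hd2.deriv
  simp only [hderiv2]
  simp only [hderiv1]
  have h := hode η
  set Y := y η with hYdef
  have hY0 : 0 < Y := hpos η
  set Y' := deriv y η
  set Y'' := deriv (deriv y) η
  have h1 : Y ^ p * Y ^ (p - 1) = Y ^ (2 * p - 2) * Y := by
    have e : Y ^ (2 * p - 2) * Y ^ (1 : ℝ) = Y ^ (2 * p - 2) * Y := by
      rw [Real.rpow_one]
    rw [← e, ← Real.rpow_add hY0, ← Real.rpow_add hY0]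
    congr 1; ring
  have h2 : Y ^ p * Y ^ (p - 1 - 1) = Y ^ (2 * p - 2) := by
    rw [← Real.rpow_add hY0]; congr 1; ring
  have h3 : (Y ^ (p - 1)) ^ 2 = Y ^ (2 * p - 2) := by
    rw [sq, ← Real.rpow_add hY0]; congr 1; ring
  have h4 : (Y ^ p) ^ (n + 1) = Y ^ (2 * p - 2) * Y ^ (p * (n - 1) + 2) := by
    rw [← Real.rpow_mul hY0.le, ← Real.rpow_add hY0]
    congr 1; ring
  have h' : p * (Y * Y'') - (a * p - p + 1) * p * Y' ^ 2
      + b * Y ^ (p * (n - 1) + 2) = 0 := by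
    linear_combination (norm := (field_simp; ring)) p * h
  linear_combination Y ^ (2 * p - 2) * h' + b * Y ^ (p * (n - 1) + 2) * h3
    - b * Y ^ (p * (n - 1) + 2) * h3 + Y'' * p * h1 + Y' ^ 2 * p * (p - 1) * h2
    - a * p ^ 2 * Y' ^ 2 * h3 + b * h4
end

section
/- Let a, b, n be real numbers with a ≠ 1, and let y : ℝ → ℝ be twice differentiable with y(η) > 0 for all η, satisfying y''(η) + b(1 − a)·y(η)^((n−a)/(1−a)) = 0 for all η (real power). Then φ = y^(1/(1−a)) satisfies φ·φ'' − a(φ')² + b·φ^(n+1) = 0, where all powers are real powers of positive reals. -/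
/-- for `p = (1-a)⁻¹` the semilinear equation
`y'' + b(1−a) y^((n−a)/(1−a)) = 0` transforms into the soliton ODE for `φ = y^(1/(1−a))`. -/
theorem stmt_3 (a b n : ℝ) (ha : a ≠ 1)
    (y : ℝ → ℝ) (hy : Differentiable ℝ y) (hy' : Differentiable ℝ (deriv y))
    (hpos : ∀ η : ℝ, 0 < y η)
    (hode : ∀ η : ℝ,
      deriv (deriv y) η + b * (1 - a) * (y η) ^ ((n - a) / (1 - a)) = 0) :
    ∀ η : ℝ,
      (fun η => (y η) ^ (1 / (1 - a))) η
          * deriv (deriv (fun η => (y η) ^ (1 / (1 - a)))) η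
        - a * (deriv (fun η => (y η) ^ (1 / (1 - a))) η) ^ 2
        + b * ((fun η => (y η) ^ (1 / (1 - a))) η) ^ (n + 1) = 0 := by
  intro η
  have hsub : (1 : ℝ) - a ≠ 0 := sub_ne_zero.mpr (Ne.symm ha)
  set p : ℝ := 1 / (1 - a) with hp
  have hd1 : ∀ x, HasDerivAt (fun t => (y t) ^ p) (deriv y x * p * y x ^ (p - 1)) x :=
    fun x => ((hy x).hasDerivAt).rpow_const (Or.inl (ne_of_gt (hpos x)))
  have hderiv1 : deriv (fun t => (y t) ^ p) = fun x => deriv y x * p * y x ^ (p - 1) :=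
    funext fun x => (hd1 x).deriv
  have hd2 : HasDerivAt (fun x => deriv y x * p * y x ^ (p - 1))
      (deriv (deriv y) η * p * y η ^ (p - 1)
        + deriv y η * p * (deriv y η * (p - 1) * y η ^ (p - 1 - 1))) η := by
    have h1 : HasDerivAt (fun x => deriv y x * p) (deriv (deriv y) η * p) η :=
      ((hy' η).hasDerivAt).mul_const p
    have h2 : HasDerivAt (fun x => y x ^ (p - 1)) (deriv y η * (p - 1) * y η ^ (p - 1 - 1)) η :=
      ((hy η).hasDerivAt).rpow_const (Or.inl (ne_of_gt (hpos η)))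
    exact h1.mul h2
  have hderiv2 : deriv (deriv (fun t => (y t) ^ p)) η
      = deriv (deriv y) η * p * y η ^ (p - 1)
        + deriv y η * p * (deriv y η * (p - 1) * y η ^ (p - 1 - 1)) := by
    rw [hderiv1]; exact hd2.deriv
  simp only [hderiv1, hderiv2]
  set Y := y η with hY
  set Y' := deriv y η
  set Y'' := deriv (deriv y) η with hY2
  have hYpos : 0 < Y := hpos η
  have hY'' : Y'' = -(b * (1 - a)) * Y ^ ((n - a) / (1 - a)) := by
    have := hode η; linarith
  have e1 : Y ^ p * Y ^ (p - 1) = Y ^ (2 * p - 1) := by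
    rw [← Real.rpow_add hYpos]; congr 1; ring
  have e2 : Y ^ p * Y ^ (p - 1 - 1) = Y ^ (2 * p - 2) := by
    rw [← Real.rpow_add hYpos]; congr 1; ring
  have e3 : (Y ^ (p - 1)) ^ 2 = Y ^ (2 * p - 2) := by
    rw [sq, ← Real.rpow_add hYpos]; congr 1; ring
  have e4 : Y ^ (2 * p - 1) * Y ^ ((n - a) / (1 - a)) = Y ^ (p * (n + 1)) := by
    rw [← Real.rpow_add hYpos]; congr 1
    rw [hp]; field_simp; ring
  have e5 : (Y ^ p) ^ (n + 1) = Y ^ (p * (n + 1)) := by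
    rw [← Real.rpow_mul hYpos.le]
  have hpb1 : p * (1 - a) = 1 := by
    rw [hp]; field_simp
  have hpp : p * (p - 1) = a * p ^ 2 := by linear_combination p * hpb1
  rw [hd2.deriv]
  calc Y ^ p * (Y'' * p * Y ^ (p - 1) + Y' * p * (Y' * (p - 1) * Y ^ (p - 1 - 1)))
        - a * (Y' * p * Y ^ (p - 1)) ^ 2 + b * (Y ^ p) ^ (n + 1)
      = p * Y'' * (Y ^ p * Y ^ (p - 1))
          + (p * (p - 1)) * (Y' ^ 2 * (Y ^ p * Y ^ (p - 1 - 1)))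
          - a * p ^ 2 * (Y' ^ 2 * (Y ^ (p - 1)) ^ 2)
          + b * ((Y ^ p) ^ (n + 1)) := by ring
    _ = p * Y'' * Y ^ (2 * p - 1) + (p * (p - 1)) * (Y' ^ 2 * Y ^ (2 * p - 2))
          - a * p ^ 2 * (Y' ^ 2 * Y ^ (2 * p - 2)) + b * Y ^ (p * (n + 1)) := by
        rw [e1, e2, e3, e5]
    _ = p * Y'' * Y ^ (2 * p - 1) + b * Y ^ (p * (n + 1)) := by
        linear_combination (Y' ^ 2 * Y ^ (2 * p - 2)) * hpp
    _ = -b * (Y ^ (2 * p - 1) * Y ^ ((n - a) / (1 - a))) + b * Y ^ (p * (n + 1)) := by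
        linear_combination (p * Y ^ (2 * p - 1)) * hY''
          - (b * Y ^ (2 * p - 1) * Y ^ ((n - a) / (1 - a))) * hpb1
    _ = 0 := by rw [e4]; ring
end

section
/- Let a, b, n be real numbers with n ≠ 2a − 1, and let φ : ℝ → ℝ be twice differentiable with φ(η) > 0 for all η, satisfying φφ'' − a(φ')² + bφ^(n+1) = 0. Then the quantity E(η) = (φ'(η))²·φ(η)^(−2a) + (2b/(n − 2a + 1))·φ(η)^(n−2a+1) is constant in η (real powers of positive reals). -/
/-! Along a solution, `E = φ'² φ^(-2a) + (2b/m) φ^m` with `m = n - 2a + 1` satisfies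
`E' = 2 φ' φ^(-2a-1) (φ φ'' - a φ'² + b φ^(n+1))`, which vanishes by the ODE;
a function with zero derivative on `ℝ` is constant. -/

open Real

noncomputable def firstIntegral (a b n : ℝ) (φ ψ : ℝ → ℝ) (η : ℝ) : ℝ :=
  ψ η ^ 2 * φ η ^ (-(2 * a)) + 2 * b / (n - 2 * a + 1) * φ η ^ (n - 2 * a + 1)

theorem hasDerivAt_firstIntegral {a b n : ℝ} {φ ψ : ℝ → ℝ} {x ψ' : ℝ}
    (hm : n - 2 * a + 1 ≠ 0) (hpos : 0 < φ x)
    (hφ : HasDerivAt φ (ψ x) x) (hψ : HasDerivAt ψ ψ' x) :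
    HasDerivAt (firstIntegral a b n φ ψ)
      (2 * ψ x * φ x ^ (-(2 * a) - 1) * (φ x * ψ' - a * ψ x ^ 2 + b * φ x ^ (n + 1))) x := by
  have hsq : HasDerivAt (fun y => ψ y ^ 2) (2 * ψ x * ψ') x := by
    simpa [mul_comm] using hψ.fun_pow 2
  have hweight := hφ.rpow_const (p := -(2 * a)) (Or.inl hpos.ne')
  have hpot := (hφ.rpow_const (p := n - 2 * a + 1) (Or.inl hpos.ne')).const_mul
    (2 * b / (n - 2 * a + 1))
  refine ((hsq.fun_mul hweight).fun_add hpot).congr_deriv ?_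
  have hweight_eq : φ x ^ (-(2 * a)) = φ x ^ (-(2 * a) - 1) * φ x := by
    rw [← rpow_add_one hpos.ne']; ring_nf
  have hpot_eq : φ x ^ (n - 2 * a + 1 - 1) = φ x ^ (n + 1) * φ x ^ (-(2 * a) - 1) := by
    rw [← rpow_add hpos]; ring_nf
  rw [hweight_eq, hpot_eq]
  field_simp
  ring

/-- first integral of the soliton ODE when `n ≠ 2a − 1`. -/
theorem stmt_4 (a b n : ℝ) (hn : n ≠ 2 * a - 1)
    (φ : ℝ → ℝ) (hφ : Differentiable ℝ φ) (hφ' : Differentiable ℝ (deriv φ))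
    (hpos : ∀ η : ℝ, 0 < φ η)
    (hode : ∀ η : ℝ,
      φ η * deriv (deriv φ) η - a * (deriv φ η) ^ 2 + b * (φ η) ^ (n + 1) = 0) :
    ∀ η₁ η₂ : ℝ,
      (deriv φ η₁) ^ 2 * (φ η₁) ^ (-(2 * a))
          + (2 * b / (n - 2 * a + 1)) * (φ η₁) ^ (n - 2 * a + 1)
        = (deriv φ η₂) ^ 2 * (φ η₂) ^ (-(2 * a))
          + (2 * b / (n - 2 * a + 1)) * (φ η₂) ^ (n - 2 * a + 1) := by
  have hm : n - 2 * a + 1 ≠ 0 := fun h => hn (by linarith)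
  have hderiv (η : ℝ) : HasDerivAt (firstIntegral a b n φ (deriv φ)) 0 η := by
    simpa [hode η] using hasDerivAt_firstIntegral (b := b) hm (hpos η)
      (hφ η).hasDerivAt (hφ' η).hasDerivAt
  exact is_const_of_deriv_eq_zero (fun η => (hderiv η).differentiableAt)
    (fun η => (hderiv η).deriv)
end

section
/- Let a, b be real numbers and set n = 2a − 1. Let φ : ℝ → ℝ be twice differentiable with φ(η) > 0 for all η, satisfying φφ'' − a(φ')² + bφ^(n+1) = 0 (real powers). Then the quantity E(η) = (φ'(η))²·φ(η)^(−2a) + 2b·log(φ(η)) is constant in η. -/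
/-!
Along any `C¹` function `f > 0` with derivative `g`, the quantity `g² f^(-2a) + 2b log f` has
derivative `2 g f^(-2a-1) (f g' - a g² + b f^(2a))`. For `n = 2a - 1` the last factor is exactly
the left-hand side of the ODE, so the quantity is a first integral.
-/

open Real

theorem hasDerivAt_sq_mul_rpow_neg_add_log {f g : ℝ → ℝ} {x q : ℝ} (a b : ℝ) (hx : 0 < f x)
    (hf : HasDerivAt f (g x) x) (hg : HasDerivAt g q x) :
    HasDerivAt (fun y => g y ^ 2 * f y ^ (-(2 * a)) + 2 * b * log (f y))
      (2 * g x * f x ^ (-(2 * a) - 1) * (f x * q - a * g x ^ 2 + b * f x ^ (2 * a))) x := by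
  have hderiv := ((hg.pow 2).mul (hf.rpow_const (p := -(2 * a)) (Or.inl hx.ne'))).add
    ((hf.log hx.ne').const_mul (2 * b))
  refine hderiv.congr_deriv ?_
  have hsplit : f x ^ (-(2 * a)) = f x ^ (-(2 * a) - 1) * f x := by
    rw [← rpow_add_one hx.ne', sub_add_cancel]
  have hinv : f x ^ (-(2 * a) - 1) * f x ^ (2 * a) = (f x)⁻¹ := by
    rw [← rpow_add hx, ← rpow_neg_one]
    ring_nf
  rw [hsplit, div_eq_mul_inv, ← hinv]
  simp only [Pi.pow_apply, Nat.cast_ofNat]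
  ring

/-- first integral of the soliton ODE in the degenerate case `n = 2a − 1`. -/
theorem stmt_5 (a b : ℝ) (n : ℝ) (hn : n = 2 * a - 1)
    (φ : ℝ → ℝ) (hφ : Differentiable ℝ φ) (hφ' : Differentiable ℝ (deriv φ))
    (hpos : ∀ η : ℝ, 0 < φ η)
    (hode : ∀ η : ℝ,
      φ η * deriv (deriv φ) η - a * (deriv φ η) ^ 2 + b * (φ η) ^ (n + 1) = 0) :
    ∀ η₁ η₂ : ℝ,
      (deriv φ η₁) ^ 2 * (φ η₁) ^ (-(2 * a)) + 2 * b * Real.log (φ η₁)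
        = (deriv φ η₂) ^ 2 * (φ η₂) ^ (-(2 * a)) + 2 * b * Real.log (φ η₂) := by
  simp only [hn, sub_add_cancel] at hode
  have hconst : ∀ η, HasDerivAt
      (fun y => deriv φ y ^ 2 * φ y ^ (-(2 * a)) + 2 * b * log (φ y)) 0 η := by
    intro η
    have hderiv := hasDerivAt_sq_mul_rpow_neg_add_log a b (hpos η)
      (hφ η).hasDerivAt (hφ' η).hasDerivAt
    rwa [hode η, mul_zero] at hderiv
  exact is_const_of_deriv_eq_zero (fun η => (hconst η).differentiableAt)
    (fun η => (hconst η).deriv)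
end

section
/- Let b ≠ 0, C₁, C₂ be real numbers, and define φ(η) = 2b/(b²(η + C₂)² − C₁). Then at every η with b²(η + C₂)² − C₁ ≠ 0, φ satisfies φ·φ'' − 2(φ')² + bφ³ = 0. -/
/-!
For `φ = c / D` the terms in `D'²` cancel in `φ φ'' - 2 φ'²`, which equals `-c² D'' / D³`.
So `φ φ'' - 2 φ'² + b φ³ = 0` wherever `D ≠ 0` as soon as `D'' = b c`. With `c = 2b` and
`D = b² (η + C₂)² - C₁` this holds, since `D'' = 2b²`.
-/

open Filter Topology

theorem deriv_const_div_eventuallyEq {D : ℝ → ℝ} {x : ℝ} (c : ℝ) (hD : Differentiable ℝ D)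
    (hx : D x ≠ 0) :
    deriv (fun y => c / D y) =ᶠ[𝓝 x] fun y => -c * deriv D y / D y ^ 2 := by
  filter_upwards [hD.continuous.continuousAt.eventually_ne hx] with y hy
  simpa using ((hasDerivAt_const y c).fun_div (hD y).hasDerivAt hy).deriv

theorem const_div_mul_deriv_deriv_sub {D : ℝ → ℝ} {x : ℝ} (c : ℝ) (hD : Differentiable ℝ D)
    (hD' : DifferentiableAt ℝ (deriv D) x) (hx : D x ≠ 0) :
    c / D x * deriv (deriv fun y => c / D y) x - 2 * deriv (fun y => c / D y) x ^ 2
      = -(c ^ 2 * deriv (deriv D) x) / D x ^ 3 := by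
  have hφ'' : HasDerivAt (fun y => -c * deriv D y / D y ^ 2)
      ((-c * deriv (deriv D) x * D x ^ 2 - -c * deriv D x * (2 * D x * deriv D x))
        / (D x ^ 2) ^ 2) x := by
    refine ((hD'.hasDerivAt.const_mul (-c)).fun_div ((hD x).hasDerivAt.fun_pow 2)
      (pow_ne_zero 2 hx)).congr_deriv ?_
    norm_num
  rw [(deriv_const_div_eventuallyEq c hD hx).deriv_eq, hφ''.deriv,
    (deriv_const_div_eventuallyEq c hD hx).eq_of_nhds]
  field_simp
  ring

theorem const_div_solves_of_deriv_deriv_eq {D : ℝ → ℝ} {x b c : ℝ} (hD : Differentiable ℝ D)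
    (hD' : DifferentiableAt ℝ (deriv D) x) (hx : D x ≠ 0) (hD'' : deriv (deriv D) x = b * c) :
    c / D x * deriv (deriv fun y => c / D y) x - 2 * deriv (fun y => c / D y) x ^ 2
      + b * (c / D x) ^ 3 = 0 := by
  rw [const_div_mul_deriv_deriv_sub c hD hD' hx, hD'']
  field_simp
  ring

theorem stmt_6_general (b C₁ C₂ : ℝ) :
    ∀ η : ℝ, b ^ 2 * (η + C₂) ^ 2 - C₁ ≠ 0 →
      (fun η => 2 * b / (b ^ 2 * (η + C₂) ^ 2 - C₁)) η
          * deriv (deriv (fun η => 2 * b / (b ^ 2 * (η + C₂) ^ 2 - C₁))) η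
        - 2 * (deriv (fun η => 2 * b / (b ^ 2 * (η + C₂) ^ 2 - C₁)) η) ^ 2
        + b * ((fun η => 2 * b / (b ^ 2 * (η + C₂) ^ 2 - C₁)) η) ^ 3 = 0 := by
  intro η hη
  have hD' (y : ℝ) :
      HasDerivAt (fun η => b ^ 2 * (η + C₂) ^ 2 - C₁) (2 * b ^ 2 * (y + C₂)) y := by
    refine ((((hasDerivAt_id' y).add_const C₂).fun_pow 2).const_mul (b ^ 2)
      |>.sub_const C₁).congr_deriv ?_
    norm_num
    ring
  have hderiv : deriv (fun η => b ^ 2 * (η + C₂) ^ 2 - C₁) = fun y => 2 * b ^ 2 * (y + C₂) :=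
    funext fun y => (hD' y).deriv
  refine const_div_solves_of_deriv_deriv_eq (fun y => (hD' y).differentiableAt)
    (by rw [hderiv]; fun_prop) hη ?_
  rw [hderiv, deriv_const_mul _ (by fun_prop), deriv_add_const, deriv_id'']
  ring

/-- `φ = 2b/(b²(η+C₂)² − C₁)` solves the case `a = 2, n = 2`. -/
theorem stmt_6 (b C₁ C₂ : ℝ) (hb : b ≠ 0) :
    ∀ η : ℝ, b ^ 2 * (η + C₂) ^ 2 - C₁ ≠ 0 →
      (fun η => 2 * b / (b ^ 2 * (η + C₂) ^ 2 - C₁)) η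
          * deriv (deriv (fun η => 2 * b / (b ^ 2 * (η + C₂) ^ 2 - C₁))) η
        - 2 * (deriv (fun η => 2 * b / (b ^ 2 * (η + C₂) ^ 2 - C₁)) η) ^ 2
        + b * ((fun η => 2 * b / (b ^ 2 * (η + C₂) ^ 2 - C₁)) η) ^ 3 = 0 :=
  stmt_6_general b C₁ C₂
end

section
/- Let λ > 0 and μ be real numbers, and let φ(η) = λ/(π((η − μ)² + λ²)) be the Cauchy distribution density. Then φ satisfies φ·φ'' − 2(φ')² + (2π/λ)·φ³ = 0 for all η ∈ ℝ. -/
/-! For `φ = c / q` one computes `φ φ'' - 2 φ'² = -(q'' / c) φ³`: with the coefficient `2`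
the terms in `q'²` cancel. The Cauchy density is `λ / q` with `q η = π ((η - μ)² + λ²)`,
whose second derivative is the constant `2π`. -/

section ConstDiv

variable {q q' q'' : ℝ → ℝ} (c : ℝ)
  (hq : ∀ x, HasDerivAt q (q' x) x) (hq' : ∀ x, HasDerivAt q' (q'' x) x) (hq0 : ∀ x, q x ≠ 0)

include hq hq0 in
theorem deriv_const_div_eq : deriv (fun x => c / q x) = fun x => -(c * q' x) / q x ^ 2 :=
  funext fun x => by simpa using ((hasDerivAt_const x c).fun_div (hq x) (hq0 x)).deriv

include hq hq' hq0 in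
theorem deriv_deriv_const_div_eq (x : ℝ) :
    deriv (deriv fun x => c / q x) x = (2 * c * q' x ^ 2 - c * q'' x * q x) / q x ^ 3 := by
  rw [deriv_const_div_eq c hq hq0]
  have hq2 : HasDerivAt (fun x => q x ^ 2) (2 * q x * q' x) x := by
    simpa using (hq x).fun_pow 2
  have hx := hq0 x
  rw [((hq' x).const_mul c).fun_neg.fun_div hq2 (pow_ne_zero 2 hx) |>.deriv]
  field_simp
  ring

include hq hq' hq0 in
theorem const_div_mul_deriv_deriv_sub_two_mul_sq (hc : c ≠ 0) (x : ℝ) :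
    c / q x * deriv (deriv fun x => c / q x) x - 2 * deriv (fun x => c / q x) x ^ 2
      = -(q'' x / c) * (c / q x) ^ 3 := by
  rw [deriv_deriv_const_div_eq c hq hq' hq0, deriv_const_div_eq c hq hq0]
  have hx := hq0 x
  field_simp
  ring

end ConstDiv

theorem hasDerivAt_pi_mul_sq_sub_add (μ a x : ℝ) :
    HasDerivAt (fun x => Real.pi * ((x - μ) ^ 2 + a)) (2 * Real.pi * (x - μ)) x :=
  ((((hasDerivAt_id' x).sub_const μ).fun_pow 2).add_const a |>.const_mul Real.pi).congr_deriv
    (by norm_num; ring)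

theorem hasDerivAt_two_pi_mul_sub (μ x : ℝ) :
    HasDerivAt (fun x => 2 * Real.pi * (x - μ)) (2 * Real.pi) x := by
  simpa using ((hasDerivAt_id x).sub_const μ).const_mul (2 * Real.pi)

/-- the Cauchy density solves `φφ'' − 2(φ')² + (2π/λ)φ³ = 0`. -/
theorem stmt_7 (lam μ : ℝ) (hlam : 0 < lam) :
    ∀ η : ℝ,
      (fun η => lam / (Real.pi * ((η - μ) ^ 2 + lam ^ 2))) η
          * deriv (deriv (fun η => lam / (Real.pi * ((η - μ) ^ 2 + lam ^ 2)))) η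
        - 2 * (deriv (fun η => lam / (Real.pi * ((η - μ) ^ 2 + lam ^ 2))) η) ^ 2
        + (2 * Real.pi / lam)
            * ((fun η => lam / (Real.pi * ((η - μ) ^ 2 + lam ^ 2))) η) ^ 3 = 0 := by
  intro η
  have hq0 (x : ℝ) : Real.pi * ((x - μ) ^ 2 + lam ^ 2) ≠ 0 := by positivity
  have key := const_div_mul_deriv_deriv_sub_two_mul_sq lam
    (hasDerivAt_pi_mul_sq_sub_add μ (lam ^ 2)) (hasDerivAt_two_pi_mul_sub μ) hq0 hlam.ne' η
  linear_combination key
end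

section
/- Let b ≠ 0, C₁, C₂ be real numbers, and define φ(η) = exp((C₁ − b²(η + C₂)²)/(2b)). Then φ satisfies φ·φ'' − (φ')² + bφ² = 0 for all η ∈ ℝ. -/
/-! For `φ = exp ∘ u` one has `φ φ'' - (φ')² = u'' φ²`. The exponent
`u η = (C₁ - b²(η + C₂)²)/(2b)` is a quadratic with `u'' = -b`, so the `bφ²` term cancels. -/

open Real

theorem exp_comp_mul_deriv_deriv_sub_sq {u u' : ℝ → ℝ} {c : ℝ}
    (hu : ∀ x, HasDerivAt u (u' x) x) (hu' : ∀ x, HasDerivAt u' c x) (x : ℝ) :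
    exp (u x) * deriv (deriv fun y => exp (u y)) x - deriv (fun y => exp (u y)) x ^ 2 =
      c * exp (u x) ^ 2 := by
  have h : deriv (fun y => exp (u y)) = fun y => exp (u y) * u' y :=
    funext fun y => (hu y).exp.deriv
  have h' : HasDerivAt (fun y => exp (u y) * u' y)
      (exp (u x) * u' x * u' x + exp (u x) * c) x :=
    (hu x).exp.mul (hu' x)
  rw [h, h'.deriv]
  ring

theorem soliton_exponent_eq (b C₁ C₂ : ℝ) :
    (fun η : ℝ => (C₁ - b ^ 2 * (η + C₂) ^ 2) / (2 * b)) =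
      fun η => C₁ / (2 * b) - b / 2 * (η + C₂) ^ 2 := by
  funext η
  rcases eq_or_ne b 0 with rfl | hb
  · simp
  · field_simp

theorem hasDerivAt_const_sub_mul_add_sq (c b C₂ η : ℝ) :
    HasDerivAt (fun η => c - b / 2 * (η + C₂) ^ 2) (-(b * (η + C₂))) η :=
  ((((hasDerivAt_id' η).add_const C₂).fun_pow 2).const_mul (b / 2)).const_sub c
    |>.congr_deriv (by norm_num; ring)

theorem hasDerivAt_neg_mul_add (b C₂ η : ℝ) :
    HasDerivAt (fun η => -(b * (η + C₂))) (-b) η :=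
  (((hasDerivAt_id' η).add_const C₂).const_mul b).fun_neg.congr_deriv (by ring)

theorem stmt_8_general (b C₁ C₂ : ℝ) :
    ∀ η : ℝ,
      (fun η => Real.exp ((C₁ - b ^ 2 * (η + C₂) ^ 2) / (2 * b))) η
          * deriv (deriv (fun η => Real.exp ((C₁ - b ^ 2 * (η + C₂) ^ 2) / (2 * b)))) η
        - (deriv (fun η => Real.exp ((C₁ - b ^ 2 * (η + C₂) ^ 2) / (2 * b))) η) ^ 2
        + b * ((fun η => Real.exp ((C₁ - b ^ 2 * (η + C₂) ^ 2) / (2 * b))) η) ^ 2 = 0 := by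
  intro η
  have hu (x : ℝ) : HasDerivAt (fun η : ℝ => (C₁ - b ^ 2 * (η + C₂) ^ 2) / (2 * b))
      (-(b * (x + C₂))) x := by
    rw [soliton_exponent_eq]
    exact hasDerivAt_const_sub_mul_add_sq _ b C₂ x
  have key := exp_comp_mul_deriv_deriv_sub_sq hu (hasDerivAt_neg_mul_add b C₂) η
  linarith

/-- `φ = exp[(C₁ − b²(η+C₂)²)/(2b)]` solves the case `a = 1, n = 1`. -/
theorem stmt_8 (b C₁ C₂ : ℝ) (hb : b ≠ 0) :
    ∀ η : ℝ,
      (fun η => Real.exp ((C₁ - b ^ 2 * (η + C₂) ^ 2) / (2 * b))) η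
          * deriv (deriv (fun η => Real.exp ((C₁ - b ^ 2 * (η + C₂) ^ 2) / (2 * b)))) η
        - (deriv (fun η => Real.exp ((C₁ - b ^ 2 * (η + C₂) ^ 2) / (2 * b))) η) ^ 2
        + b * ((fun η => Real.exp ((C₁ - b ^ 2 * (η + C₂) ^ 2) / (2 * b))) η) ^ 2 = 0 :=
  stmt_8_general b C₁ C₂
end

section
/- Let ν > 0, b ≠ 0, C₁, C₂ be real numbers and set a = n = (ν + 3)/(ν + 1). Define g(η) = (b²(η + C₂)² − C₁)/(b(ν + 1)) and φ(η) = g(η)^(−(ν+1)/2) (real power). Then at every η with g(η) > 0, φ satisfies φ·φ'' − a(φ')² + b·φ^(n+1) = 0, where all powers are real powers of positive reals. -/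
/-!
For `φ = g ^ p` with `g > 0` one has `φ φ'' - (1 - 1/p) φ'² = p g^(2p-1) g''`: the `g'²` terms
cancel exactly because `a = 1 - 1/p`. With `p = -(ν+1)/2` this is the paper's `a = (ν+3)/(ν+1)`,
and `φ^(n+1) = g^(2p-1)`. For the quadratic `g` of the statement `g'' = 2b/(ν+1)`, so
`p g'' = -b` and the term `b φ^(n+1)` cancels the rest.
-/

open Filter Topology

theorem rpow_mul_deriv_deriv_sub_sq_deriv {g : ℝ → ℝ} {η p : ℝ} (hp : p ≠ 0)
    (hg : 0 < g η) (hd : ∀ᶠ x in 𝓝 η, DifferentiableAt ℝ g x)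
    (hd2 : DifferentiableAt ℝ (deriv g) η) :
    g η ^ p * deriv (deriv fun x => g x ^ p) η - (1 - 1 / p) * deriv (fun x => g x ^ p) η ^ 2
      = p * g η ^ (2 * p - 1) * deriv (deriv g) η := by
  have hpos : ∀ᶠ x in 𝓝 η, 0 < g x :=
    hd.self_of_nhds.continuousAt.eventually (lt_mem_nhds hg)
  have hφ' : deriv (fun x => g x ^ p) =ᶠ[𝓝 η] fun x => deriv g x * p * g x ^ (p - 1) := by
    filter_upwards [hd, hpos] with x hdx hx
    exact deriv_rpow_const hdx (Or.inl hx.ne')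
  have hφ'' : deriv (deriv fun x => g x ^ p) η
      = deriv (deriv g) η * p * g η ^ (p - 1)
        + deriv g η * p * (deriv g η * (p - 1) * g η ^ (p - 1 - 1)) := by
    rw [hφ'.deriv_eq]
    exact ((hd2.hasDerivAt.mul_const p).mul
      (hd.self_of_nhds.hasDerivAt.rpow_const (Or.inl hg.ne'))).deriv
  simp only [hφ'', hφ'.self_of_nhds]
  set G := g η
  have hG1 : G ^ (p - 1) = G ^ p / G := by rw [Real.rpow_sub hg, Real.rpow_one]
  have hG2 : G ^ (p - 1 - 1) = G ^ p / G / G := by rw [Real.rpow_sub hg (p - 1), hG1, Real.rpow_one]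
  have hG3 : G ^ (2 * p - 1) = G ^ p * G ^ p / G := by
    rw [Real.rpow_sub hg, two_mul, Real.rpow_add hg, Real.rpow_one]
  rw [hG1, hG2, hG3]
  field_simp
  ring

theorem hasDerivAt_quadratic_div (c d e k x : ℝ) :
    HasDerivAt (fun x => (c * (x + d) ^ 2 - e) / k) (2 * c * (x + d) / k) x :=
  (((((hasDerivAt_id' x).add_const d).pow 2).const_mul c).sub_const e
    |>.div_const k).congr_deriv (by ring)

theorem deriv_quadratic_div (c d e k : ℝ) :
    deriv (fun x => (c * (x + d) ^ 2 - e) / k) = fun x => 2 * c * (x + d) / k :=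
  funext fun x => (hasDerivAt_quadratic_div c d e k x).deriv

theorem deriv_deriv_quadratic_div (c d e k x : ℝ) :
    deriv (deriv fun x => (c * (x + d) ^ 2 - e) / k) x = 2 * c / k := by
  rw [deriv_quadratic_div]
  exact ((((hasDerivAt_id' x).add_const d).const_mul (2 * c)).div_const k).deriv.trans (by ring)

theorem stmt_10_general (ν b C₁ C₂ : ℝ) (hν : 0 < ν)
    (a n : ℝ) (ha : a = (ν + 3) / (ν + 1)) (hn : n = (ν + 3) / (ν + 1)) :
    ∀ η : ℝ, (b ^ 2 * (η + C₂) ^ 2 - C₁) / (b * (ν + 1)) > 0 →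
      (fun η => ((b ^ 2 * (η + C₂) ^ 2 - C₁) / (b * (ν + 1))) ^ (-(ν + 1) / 2)) η
          * deriv (deriv (fun η =>
              ((b ^ 2 * (η + C₂) ^ 2 - C₁) / (b * (ν + 1))) ^ (-(ν + 1) / 2))) η
        - a * (deriv (fun η =>
              ((b ^ 2 * (η + C₂) ^ 2 - C₁) / (b * (ν + 1))) ^ (-(ν + 1) / 2)) η) ^ 2
        + b * ((fun η =>
              ((b ^ 2 * (η + C₂) ^ 2 - C₁) / (b * (ν + 1))) ^ (-(ν + 1) / 2)) η)
            ^ (n + 1) = 0 := by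
  intro η hg
  set g : ℝ → ℝ := fun x => (b ^ 2 * (x + C₂) ^ 2 - C₁) / (b * (ν + 1))
  set p : ℝ := -(ν + 1) / 2
  have hν1 : ν + 1 ≠ 0 := by positivity
  have key := rpow_mul_deriv_deriv_sub_sq_deriv (g := g) (p := p)
    (div_ne_zero (neg_ne_zero.mpr hν1) two_ne_zero) hg
    (Eventually.of_forall fun x => (hasDerivAt_quadratic_div _ _ _ _ x).differentiableAt)
    (by rw [deriv_quadratic_div]; fun_prop)
  have ha' : a = 1 - 1 / p := by rw [ha]; simp only [p]; field_simp; ring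
  have hn' : p * (n + 1) = 2 * p - 1 := by rw [hn]; simp only [p]; field_simp; ring
  beta_reduce
  rw [ha', ← Real.rpow_mul hg.le, hn', key, deriv_deriv_quadratic_div]
  field_simp
  ring

/-- `φ = g^(−(ν+1)/2)` with `g = (b²(η+C₂)² − C₁)/(b(ν+1))` solves the
case `a = n = (ν+3)/(ν+1)` wherever `g > 0`. -/
theorem stmt_10 (ν b C₁ C₂ : ℝ) (hν : 0 < ν) (hb : b ≠ 0)
    (a n : ℝ) (ha : a = (ν + 3) / (ν + 1)) (hn : n = (ν + 3) / (ν + 1)) :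
    ∀ η : ℝ, (b ^ 2 * (η + C₂) ^ 2 - C₁) / (b * (ν + 1)) > 0 →
      (fun η => ((b ^ 2 * (η + C₂) ^ 2 - C₁) / (b * (ν + 1))) ^ (-(ν + 1) / 2)) η
          * deriv (deriv (fun η =>
              ((b ^ 2 * (η + C₂) ^ 2 - C₁) / (b * (ν + 1))) ^ (-(ν + 1) / 2))) η
        - a * (deriv (fun η =>
              ((b ^ 2 * (η + C₂) ^ 2 - C₁) / (b * (ν + 1))) ^ (-(ν + 1) / 2)) η) ^ 2
        + b * ((fun η =>
              ((b ^ 2 * (η + C₂) ^ 2 - C₁) / (b * (ν + 1))) ^ (-(ν + 1) / 2)) η)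
            ^ (n + 1) = 0 :=
  stmt_10_general ν b C₁ C₂ hν a n ha hn
end

section
/- Let ν > 0 be real, set D = Γ((ν+1)/2)/(√(νπ)·Γ(ν/2)), a = n = (ν + 3)/(ν + 1), and b = ((ν + 1)/ν)·D^(−2/(ν+1)) (real powers). Then the Student's t distribution density φ(η) = D·(1 + η²/ν)^(−(ν+1)/2) satisfies φ·φ'' − a(φ')² + b·φ^(n+1) = 0 for all η ∈ ℝ, where all powers are real powers of positive reals and Γ is the Gamma function. -/
/-!
Write `φ = C · g ^ p` with `g η = 1 + η² / ν` and `p = -(ν + 1) / 2`. For any power of a positive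
function, `φ φ'' - a φ'² = C² p g^(2p-2) (((p - 1) - a p) g'² + g g'')`, so the choice
`a = 1 - 1/p = (ν + 3)/(ν + 1)` kills the `g'²` term and leaves `C² p g'' g^(2p-1)`. Since `g'' = 2/ν`
is constant and `p (n + 1) = 2p - 1`, this is cancelled exactly by `b φ^(n+1)`, the exponent
`-2/(ν+1)` in `b` turning `D^(n+1)` into `D²`.
-/

open Real

theorem hasDerivAt_const_mul_rpow {g : ℝ → ℝ} {g' x : ℝ} (C p : ℝ) (hg : HasDerivAt g g' x)
    (hx : 0 < g x) : HasDerivAt (fun y => C * g y ^ p) (C * p * g x ^ (p - 1) * g') x :=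
  ((hg.rpow_const (Or.inl hx.ne')).const_mul C).congr_deriv (by ring)

section PowerOfPositiveFunction

variable {g g' g'' : ℝ → ℝ} (hg : ∀ x, HasDerivAt g (g' x) x)
  (hg' : ∀ x, HasDerivAt g' (g'' x) x) (hpos : ∀ x, 0 < g x)
include hg hpos

theorem deriv_const_mul_rpow (C p : ℝ) :
    deriv (fun y => C * g y ^ p) = fun x => C * p * g x ^ (p - 1) * g' x :=
  funext fun x => (hasDerivAt_const_mul_rpow C p (hg x) (hpos x)).deriv

include hg'

theorem deriv_deriv_const_mul_rpow (C p x : ℝ) :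
    deriv (deriv fun y => C * g y ^ p) x
      = C * p * ((p - 1) * g x ^ (p - 2) * g' x ^ 2 + g x ^ (p - 1) * g'' x) := by
  rw [deriv_const_mul_rpow hg hpos]
  have h := (hasDerivAt_const_mul_rpow (C * p) (p - 1) (hg x) (hpos x)).mul (hg' x)
  rw [show p - 1 - 1 = p - 2 by ring] at h
  exact (h.congr_deriv (by ring)).deriv

theorem const_mul_rpow_mul_deriv_deriv_sub_sq {a : ℝ} (C p : ℝ) (ha : a * p = p - 1) (x : ℝ) :
    C * g x ^ p * deriv (deriv fun y => C * g y ^ p) x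
      - a * deriv (fun y => C * g y ^ p) x ^ 2
      = C ^ 2 * p * g x ^ (2 * p - 1) * g'' x := by
  have hx := hpos x
  have h_pow_sub_one : g x ^ (p - 1) = g x ^ p / g x := by
    rw [rpow_sub hx, rpow_one]
  have h_pow_sub_two : g x ^ (p - 2) = g x ^ p / g x ^ 2 := by
    rw [rpow_sub hx, rpow_two]
  have h_two_mul_sub_one : g x ^ (2 * p - 1) = (g x ^ p) ^ 2 / g x := by
    rw [rpow_sub hx, rpow_one, mul_comm, rpow_mul hx.le, rpow_two]
  rw [deriv_deriv_const_mul_rpow hg hg' hpos, deriv_const_mul_rpow hg hpos]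
  beta_reduce
  rw [h_pow_sub_one, h_pow_sub_two, h_two_mul_sub_one]
  field_simp
  linear_combination (-(C ^ 2 * p * g' x ^ 2)) * ha

end PowerOfPositiveFunction

theorem studentT_normalizer_pos {ν : ℝ} (hν : 0 < ν) :
    0 < Gamma ((ν + 1) / 2) / (√(ν * π) * Gamma (ν / 2)) := by
  have := Gamma_pos_of_pos (s := (ν + 1) / 2) (by positivity)
  have := Gamma_pos_of_pos (s := ν / 2) (by positivity)
  have : 0 < √(ν * π) := sqrt_pos.mpr (by positivity)
  positivity

theorem hasDerivAt_one_add_sq_div (ν x : ℝ) :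
    HasDerivAt (fun y : ℝ => 1 + y ^ 2 / ν) (2 * x / ν) x := by
  simpa using ((hasDerivAt_pow 2 x).div_const ν).const_add 1

theorem hasDerivAt_two_mul_div (ν x : ℝ) : HasDerivAt (fun y : ℝ => 2 * y / ν) (2 / ν) x := by
  simpa using ((hasDerivAt_id x).const_mul 2).div_const ν

/-- the Student's t density solves the soliton ODE with
`a = n = (ν+3)/(ν+1)` and `b = ((ν+1)/ν) D^(−2/(ν+1))`. -/
theorem stmt_11 (ν : ℝ) (hν : 0 < ν)
    (D : ℝ) (hD : D = Real.Gamma ((ν + 1) / 2) / (Real.sqrt (ν * Real.pi) * Real.Gamma (ν / 2)))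
    (a n : ℝ) (ha : a = (ν + 3) / (ν + 1)) (hn : n = (ν + 3) / (ν + 1))
    (b : ℝ) (hb : b = ((ν + 1) / ν) * D ^ (-2 / (ν + 1))) :
    ∀ η : ℝ,
      (fun η => D * (1 + η ^ 2 / ν) ^ (-(ν + 1) / 2)) η
          * deriv (deriv (fun η => D * (1 + η ^ 2 / ν) ^ (-(ν + 1) / 2))) η
        - a * (deriv (fun η => D * (1 + η ^ 2 / ν) ^ (-(ν + 1) / 2)) η) ^ 2
        + b * ((fun η => D * (1 + η ^ 2 / ν) ^ (-(ν + 1) / 2)) η) ^ (n + 1) = 0 := by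
  intro η
  set p := -(ν + 1) / 2 with hp
  have hu : 0 < 1 + η ^ 2 / ν := by positivity
  have hD0 : 0 < D := hD ▸ studentT_normalizer_pos hν
  have hap : a * p = p - 1 := by
    rw [ha, hp]; field_simp; ring
  have h_exp : p * (n + 1) = 2 * p - 1 := by
    rw [hn, hp]; field_simp; ring
  have h_coeff : b * D ^ (n + 1) = (ν + 1) / ν * D ^ 2 := by
    rw [hb, mul_assoc, ← rpow_add hD0, hn,
      show -2 / (ν + 1) + ((ν + 3) / (ν + 1) + 1) = 2 by field_simp; ring, rpow_two]
  have h_power : b * (D * (1 + η ^ 2 / ν) ^ p) ^ (n + 1)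
      = (ν + 1) / ν * D ^ 2 * (1 + η ^ 2 / ν) ^ (2 * p - 1) := by
    rw [mul_rpow hD0.le (rpow_nonneg hu.le _), ← rpow_mul hu.le, h_exp, ← mul_assoc, h_coeff]
  beta_reduce
  rw [const_mul_rpow_mul_deriv_deriv_sub_sq (hasDerivAt_one_add_sq_div ν)
    (hasDerivAt_two_mul_div ν) (fun x => by positivity) D p hap, h_power, hp]
  field_simp
  ring
end

section
/- Let a be a real number, F : ℝ → ℝ a function, and G : (0,∞) → ℝ a differentiable function with G'(y) = 2·F(y)·y^(−1−2a) for all y > 0 (real power). If φ : ℝ → ℝ is twice differentiable with φ(η) > 0 for all η and satisfies φ·φ'' − a(φ')² = F(φ), then the quantity (φ'(η))²·φ(η)^(−2a) − G(φ(η)) is constant in η. -/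
/-! Along a solution, the derivative of `(φ')² φ^(-2a)` is
`2 φ' φ^(-1-2a) (φ φ'' - a (φ')²) = 2 F(φ) φ^(-1-2a) φ'`, which by the chain rule is also the
derivative of `G ∘ φ`; so their difference has zero derivative everywhere. -/

open Real

theorem HasDerivAt.sq_mul_rpow_neg_two_mul {f g : ℝ → ℝ} {f' g' x : ℝ} (a : ℝ)
    (hf : HasDerivAt f f' x) (hg : HasDerivAt g g' x) (hfx : f x ≠ 0) :
    HasDerivAt (fun t => g t ^ 2 * f t ^ (-(2 * a)))
      (2 * g x * f x ^ (-1 - 2 * a) * (f x * g' - a * g x * f')) x := by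
  refine ((hg.pow 2).mul (hf.rpow_const (p := -(2 * a)) (Or.inl hfx))).congr_deriv ?_
  have hsplit : f x ^ (-(2 * a)) = f x ^ (-1 - 2 * a) * f x := by
    rw [← rpow_add_one hfx]; ring_nf
  rw [hsplit, show -(2 * a) - 1 = -1 - 2 * a by ring]
  simp only [Pi.pow_apply, Nat.cast_ofNat]
  ring

theorem hasDerivAt_sq_deriv_mul_rpow_sub_comp (a : ℝ) (F G : ℝ → ℝ) {φ : ℝ → ℝ} {η : ℝ}
    (hG : HasDerivAt G (2 * F (φ η) * φ η ^ (-1 - 2 * a)) (φ η))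
    (hφ : DifferentiableAt ℝ φ η) (hφ' : DifferentiableAt ℝ (deriv φ) η) (hφη : φ η ≠ 0)
    (hode : φ η * deriv (deriv φ) η - a * deriv φ η ^ 2 = F (φ η)) :
    HasDerivAt (fun t => deriv φ t ^ 2 * φ t ^ (-(2 * a)) - G (φ t)) 0 η := by
  refine ((hφ.hasDerivAt.sq_mul_rpow_neg_two_mul a hφ'.hasDerivAt hφη).sub
    (hG.comp η hφ.hasDerivAt)).congr_deriv ?_
  rw [← hode]
  ring

/-- first integral of the general equation `φφ'' − a(φ')² = F(φ)`. -/
theorem stmt_12 (a : ℝ) (F : ℝ → ℝ) (G : ℝ → ℝ)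
    (hG : ∀ y : ℝ, 0 < y → HasDerivAt G (2 * F y * y ^ (-1 - 2 * a)) y)
    (φ : ℝ → ℝ) (hφ : Differentiable ℝ φ) (hφ' : Differentiable ℝ (deriv φ))
    (hpos : ∀ η : ℝ, 0 < φ η)
    (hode : ∀ η : ℝ, φ η * deriv (deriv φ) η - a * (deriv φ η) ^ 2 = F (φ η)) :
    ∀ η₁ η₂ : ℝ,
      (deriv φ η₁) ^ 2 * (φ η₁) ^ (-(2 * a)) - G (φ η₁)
        = (deriv φ η₂) ^ 2 * (φ η₂) ^ (-(2 * a)) - G (φ η₂) := by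
  have hderiv (η : ℝ) := hasDerivAt_sq_deriv_mul_rpow_sub_comp a F G
    (hG (φ η) (hpos η)) (hφ η) (hφ' η) (hpos η).ne' (hode η)
  exact is_const_of_deriv_eq_zero (fun η => (hderiv η).differentiableAt)
    (fun η => (hderiv η).deriv)
end

section
/- Let f > 0, b > 0, and C₂ be real numbers, and define φ(η) = (b/(2f))/(1 + exp(−(b/(2√f))·(η + C₂))). Then φ satisfies φ·φ'' − (φ')² = f·φ⁴ − (b/2)·φ³ for all η ∈ ℝ. In particular, for b = 1 the solution φ has the form of the Fermi–Dirac distribution (a constant multiple of 1/(e^x + 1)). -/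
/-! The profile is `A · σ(K(η + C₂))` with `σ` the logistic sigmoid, `A = b/(2f)` and
`K = b/(2√f)`. From `σ' = σ(1 - σ)` one gets `φφ'' - (φ')² = A²K²σ³(σ - 1)`, and for these
`A`, `K` the three coefficients `A²K²`, `fA⁴` and `(b/2)A³` all equal `b⁴/(16f³)`. -/

open Real

section ScaledSigmoid

variable (A K C : ℝ)

lemma hasDerivAt_scaled_sigmoid (η : ℝ) :
    HasDerivAt (fun η => A * sigmoid (K * (η + C)))
      (A * K * (sigmoid (K * (η + C)) * (1 - sigmoid (K * (η + C))))) η := by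
  have hlin : HasDerivAt (fun η => K * (η + C)) K η := by
    simpa using ((hasDerivAt_id η).add_const C).const_mul K
  exact (((hasDerivAt_sigmoid _).comp η hlin).const_mul A).congr_deriv (by ring)

lemma deriv_scaled_sigmoid :
    deriv (fun η => A * sigmoid (K * (η + C)))
      = fun η => A * K * (sigmoid (K * (η + C)) * (1 - sigmoid (K * (η + C)))) :=
  funext fun η => (hasDerivAt_scaled_sigmoid A K C η).deriv

lemma deriv_deriv_scaled_sigmoid (η : ℝ) :
    deriv (deriv (fun η => A * sigmoid (K * (η + C)))) η
      = A * K ^ 2 * (sigmoid (K * (η + C)) * (1 - sigmoid (K * (η + C)))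
          * (1 - 2 * sigmoid (K * (η + C)))) := by
  have hs := hasDerivAt_scaled_sigmoid 1 K C η
  simp only [one_mul] at hs
  rw [deriv_scaled_sigmoid]
  exact (((hs.mul (hs.const_sub 1)).const_mul (A * K)).congr_deriv (by ring)).deriv

lemma scaled_sigmoid_mul_deriv_deriv_sub_sq (η : ℝ) :
    A * sigmoid (K * (η + C)) * deriv (deriv (fun η => A * sigmoid (K * (η + C)))) η
        - deriv (fun η => A * sigmoid (K * (η + C))) η ^ 2
      = A ^ 2 * K ^ 2 * sigmoid (K * (η + C)) ^ 3 * (sigmoid (K * (η + C)) - 1) := by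
  rw [deriv_deriv_scaled_sigmoid, deriv_scaled_sigmoid]
  ring

end ScaledSigmoid

theorem stmt_13_general (f b C₂ : ℝ) (hf : 0 < f) :
    (∀ η : ℝ,
      (fun η => (b / (2 * f)) / (1 + Real.exp (-(b / (2 * Real.sqrt f)) * (η + C₂)))) η
          * deriv (deriv (fun η =>
              (b / (2 * f)) / (1 + Real.exp (-(b / (2 * Real.sqrt f)) * (η + C₂))))) η
        - (deriv (fun η =>
              (b / (2 * f)) / (1 + Real.exp (-(b / (2 * Real.sqrt f)) * (η + C₂)))) η) ^ 2
        = f * ((fun η =>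
              (b / (2 * f)) / (1 + Real.exp (-(b / (2 * Real.sqrt f)) * (η + C₂)))) η) ^ 4
          - (b / 2) * ((fun η =>
              (b / (2 * f)) / (1 + Real.exp (-(b / (2 * Real.sqrt f)) * (η + C₂)))) η) ^ 3)
    ∧ (b = 1 → ∃ c k d : ℝ, ∀ η : ℝ,
        (b / (2 * f)) / (1 + Real.exp (-(b / (2 * Real.sqrt f)) * (η + C₂)))
          = c / (Real.exp (k * η + d) + 1)) := by
  set A := b / (2 * f)
  set K := b / (2 * √f)
  have hφ : (fun η => A / (1 + exp (-K * (η + C₂)))) = fun η => A * sigmoid (K * (η + C₂)) := by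
    ext η
    rw [sigmoid_def, neg_mul, div_eq_mul_inv]
  refine ⟨fun η => ?_, fun _ => ⟨A, -K, -K * C₂, fun η => ?_⟩⟩
  · rw [hφ, scaled_sigmoid_mul_deriv_deriv_sub_sq]
    have hK : K ^ 2 = b ^ 2 / (4 * f) := by
      rw [div_pow, mul_pow, sq_sqrt hf.le]
      ring
    simp only [mul_pow, hK, A]
    field_simp
    ring
  · rw [add_comm (exp _), mul_add, neg_mul]

/-- the logistic profile solves `φφ'' − (φ')² = fφ⁴ − (b/2)φ³`;
for `b = 1` it has the Fermi–Dirac form. -/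
theorem stmt_13 (f b C₂ : ℝ) (hf : 0 < f) (hb : 0 < b) :
    (∀ η : ℝ,
      (fun η => (b / (2 * f)) / (1 + Real.exp (-(b / (2 * Real.sqrt f)) * (η + C₂)))) η
          * deriv (deriv (fun η =>
              (b / (2 * f)) / (1 + Real.exp (-(b / (2 * Real.sqrt f)) * (η + C₂))))) η
        - (deriv (fun η =>
              (b / (2 * f)) / (1 + Real.exp (-(b / (2 * Real.sqrt f)) * (η + C₂)))) η) ^ 2
        = f * ((fun η =>
              (b / (2 * f)) / (1 + Real.exp (-(b / (2 * Real.sqrt f)) * (η + C₂)))) η) ^ 4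
          - (b / 2) * ((fun η =>
              (b / (2 * f)) / (1 + Real.exp (-(b / (2 * Real.sqrt f)) * (η + C₂)))) η) ^ 3)
    ∧ (b = 1 → ∃ c k d : ℝ, ∀ η : ℝ,
        (b / (2 * f)) / (1 + Real.exp (-(b / (2 * Real.sqrt f)) * (η + C₂)))
          = c / (Real.exp (k * η + d) + 1)) :=
  stmt_13_general f b C₂ hf
end

section
/- Let f < 0, b < 0, and C be real numbers, and define φ(η) = √(f/b)·tanh(√(−f/2)·η + C). Then φ satisfies φ·φ'' = f·φ² − b·φ⁴ for all η ∈ ℝ. -/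
open Real

theorem Real.hasDerivAt_tanh (x : ℝ) : HasDerivAt tanh (1 - tanh x ^ 2) x := by
  have h := (hasDerivAt_sinh x).div (hasDerivAt_cosh x) (cosh_pos x).ne'
  rw [show sinh / cosh = tanh from funext fun y => (tanh_eq_sinh_div_cosh y).symm] at h
  refine h.congr_deriv ?_
  rw [tanh_eq_sinh_div_cosh, div_pow, one_sub_div (pow_ne_zero 2 (cosh_pos x).ne')]
  ring

section TanhProfile

variable (A k C : ℝ)

theorem hasDerivAt_tanh_mul_add (x : ℝ) :
    HasDerivAt (fun η => tanh (k * η + C)) (k * (1 - tanh (k * x + C) ^ 2)) x := by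
  have hlin : HasDerivAt (fun η : ℝ => k * η + C) k x := by
    simpa using ((hasDerivAt_id x).const_mul k).add_const C
  exact ((hasDerivAt_tanh _).comp x hlin).congr_deriv (mul_comm _ _)

theorem deriv_const_mul_tanh_mul_add :
    deriv (fun η => A * tanh (k * η + C)) = fun η => A * k * (1 - tanh (k * η + C) ^ 2) := by
  funext x
  rw [((hasDerivAt_tanh_mul_add k C x).const_mul A).deriv]
  ring

theorem deriv_deriv_const_mul_tanh_mul_add (x : ℝ) :
    deriv (deriv fun η => A * tanh (k * η + C)) x
      = -2 * A * k ^ 2 * tanh (k * x + C) * (1 - tanh (k * x + C) ^ 2) := by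
  rw [deriv_const_mul_tanh_mul_add]
  exact ((((hasDerivAt_tanh_mul_add k C x).pow 2).const_sub 1).const_mul (A * k)).deriv.trans
    (by ring)

/-- With `t = tanh (k η + C)` both sides equal `-2 A² k² t² (1 - t²)`. -/
theorem const_mul_tanh_mul_add_solves (f b : ℝ) (hk : 2 * k ^ 2 = -f) (hA : b * A ^ 2 = f)
    (η : ℝ) :
    A * tanh (k * η + C) * deriv (deriv fun η => A * tanh (k * η + C)) η
      = f * (A * tanh (k * η + C)) ^ 2 - b * (A * tanh (k * η + C)) ^ 4 := by
  rw [deriv_deriv_const_mul_tanh_mul_add]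
  linear_combination -(A * tanh (k * η + C)) ^ 2 * (1 - tanh (k * η + C) ^ 2) * hk
    + A ^ 2 * tanh (k * η + C) ^ 4 * hA

end TanhProfile

/-- `φ = √(f/b) tanh(√(−f/2) η + C)` solves `φφ'' = fφ² − bφ⁴`. -/
theorem stmt_15 (f b C : ℝ) (hf : f < 0) (hb : b < 0) :
    ∀ η : ℝ,
      (fun η => Real.sqrt (f / b) * Real.tanh (Real.sqrt (-f / 2) * η + C)) η
          * deriv (deriv (fun η =>
              Real.sqrt (f / b) * Real.tanh (Real.sqrt (-f / 2) * η + C))) η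
        = f * ((fun η =>
              Real.sqrt (f / b) * Real.tanh (Real.sqrt (-f / 2) * η + C)) η) ^ 2
          - b * ((fun η =>
              Real.sqrt (f / b) * Real.tanh (Real.sqrt (-f / 2) * η + C)) η) ^ 4 := by
  have hk : 2 * sqrt (-f / 2) ^ 2 = -f := by
    rw [sq_sqrt (by linarith)]
    ring
  have hA : b * sqrt (f / b) ^ 2 = f := by
    rw [sq_sqrt (div_nonneg_of_nonpos hf.le hb.le), mul_div_cancel₀ _ hb.ne]
  exact const_mul_tanh_mul_add_solves _ _ C f b hk hA
end

section
/- Let m > 0, a > 0, and C be real numbers, and let I = {η ∈ ℝ : exp(−2mη + C) > a/2}. Define φ : I → ℝ by φ(η) = √(2m²/(exp(−2mη + C) − a/2)). Then φ satisfies φ''(η) = m²·φ(η) + a·φ(η)³ + (3a²/(16m²))·φ(η)⁵ for all η ∈ I; equivalently, φ² = 2m²/(e^(−2mη+C) − a/2) is a traveling-wave solution of Eq. (18) with b = √3·a/(4m). In particular for a = 2, φ(η)² = 2m²/(e^(−2mη+C) − 1) is the Bose–Einstein distribution. -/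
/-!
Write `g η = e^(−2mη+C) − a/2`, so that `g' = −2m (g + a/2)`. Then `u = 2m²/g` solves the
Riccati equation `u' = 2m (u + κ u²)` with `κ = a/(4m²)`, hence `φ = √u` solves the autonomous
equation `φ' = F(φ)` with `F(y) = m (y + κ y³)`. Differentiating once more,
`φ'' = F'(φ) F(φ) = m² (1 + 3κφ²)(φ + κφ³) = m²φ + aφ³ + (3a²/(16m²))φ⁵`.
-/

open Topology

theorem deriv_deriv_eq_of_hasDerivAt_autonomous {ψ F : ℝ → ℝ} {F' x : ℝ}
    (hψ : ∀ᶠ y in 𝓝 x, HasDerivAt ψ (F (ψ y)) y) (hF : HasDerivAt F F' (ψ x)) :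
    deriv (deriv ψ) x = F' * F (ψ x) := by
  have hderiv : deriv ψ =ᶠ[𝓝 x] F ∘ ψ := hψ.mono fun y hy => hy.deriv
  rw [hderiv.deriv_eq]
  exact (hF.comp x hψ.self_of_nhds).deriv

theorem hasDerivAt_const_div_of_hasDerivAt_affine {g : ℝ → ℝ} {x c lam β : ℝ}
    (hg : HasDerivAt g (lam * (g x + β)) x) (hgx : g x ≠ 0) :
    HasDerivAt (fun y => c / g y) (-lam * (c / g x + β / c * (c / g x) ^ 2)) x := by
  refine ((hasDerivAt_const x c).div hg hgx).congr_deriv ?_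
  field_simp
  ring

theorem hasDerivAt_sqrt_of_hasDerivAt_quadratic {u : ℝ → ℝ} {x μ κ : ℝ}
    (hu : HasDerivAt u (2 * μ * (u x + κ * u x ^ 2)) x) (hux : 0 < u x) :
    HasDerivAt (fun y => √(u y)) (μ * (√(u x) + κ * √(u x) ^ 3)) x := by
  refine (hu.sqrt hux.ne').congr_deriv ?_
  have hsq : √(u x) ^ 2 = u x := Real.sq_sqrt hux.le
  set s := √(u x)
  rw [← hsq]
  field_simp

theorem stmt_18_general (m a C : ℝ) (hm : 0 < m) :
    ∀ η : ℝ, Real.exp (-(2 * m * η) + C) > a / 2 →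
      deriv (deriv (fun η =>
          Real.sqrt (2 * m ^ 2 / (Real.exp (-(2 * m * η) + C) - a / 2)))) η
        = m ^ 2 * ((fun η =>
            Real.sqrt (2 * m ^ 2 / (Real.exp (-(2 * m * η) + C) - a / 2))) η)
          + a * ((fun η =>
            Real.sqrt (2 * m ^ 2 / (Real.exp (-(2 * m * η) + C) - a / 2))) η) ^ 3
          + (3 * a ^ 2 / (16 * m ^ 2)) * ((fun η =>
            Real.sqrt (2 * m ^ 2 / (Real.exp (-(2 * m * η) + C) - a / 2))) η) ^ 5
      ∧ ((fun η =>
            Real.sqrt (2 * m ^ 2 / (Real.exp (-(2 * m * η) + C) - a / 2))) η) ^ 2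
          = 2 * m ^ 2 / (Real.exp (-(2 * m * η) + C) - a / 2)
      ∧ (a = 2 → ((fun η =>
            Real.sqrt (2 * m ^ 2 / (Real.exp (-(2 * m * η) + C) - a / 2))) η) ^ 2
          = 2 * m ^ 2 / (Real.exp (-(2 * m * η) + C) - 1)) := by
  intro η hη
  set φ : ℝ → ℝ := fun x => √(2 * m ^ 2 / (Real.exp (-(2 * m * x) + C) - a / 2))
  set g : ℝ → ℝ := fun x => Real.exp (-(2 * m * x) + C) - a / 2
  set κ := a / (4 * m ^ 2)
  set F : ℝ → ℝ := fun y => m * (y + κ * y ^ 3)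
  have hg : ∀ x, HasDerivAt g (-(2 * m) * (g x + a / 2)) x := fun x => by
    simpa [g, mul_comm] using
      ((((hasDerivAt_id x).const_mul (2 * m)).neg.add_const C).exp).sub_const (a / 2)
  have hφ : ∀ x, 0 < g x → HasDerivAt φ (F (φ x)) x := by
    intro x hx
    refine hasDerivAt_sqrt_of_hasDerivAt_quadratic (u := fun y => 2 * m ^ 2 / g y) ?_
      (by positivity)
    refine (hasDerivAt_const_div_of_hasDerivAt_affine (hg x) hx.ne').congr_deriv ?_
    simp only [κ]
    field_simp
    ring
  have hF : ∀ y, HasDerivAt F (m * (1 + 3 * κ * y ^ 2)) y := fun y =>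
    (((hasDerivAt_id' y).add ((hasDerivAt_pow 3 y).const_mul κ)).const_mul m).congr_deriv
      (by push_cast; ring)
  have hgη : 0 < g η := sub_pos.mpr hη
  have hnear : ∀ᶠ x in 𝓝 η, 0 < g x := continuousAt_const.eventually_lt (hg η).continuousAt hgη
  have hφ_sq : φ η ^ 2 = 2 * m ^ 2 / g η := Real.sq_sqrt (by positivity)
  refine ⟨?_, hφ_sq, fun ha2 => ?_⟩
  · rw [deriv_deriv_eq_of_hasDerivAt_autonomous (hnear.mono hφ) (hF _)]
    simp only [F, κ]
    field_simp
    ring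
  · rw [hφ_sq]
    norm_num [g, ha2]

/-- `φ = √(2m²/(e^(−2mη+C) − a/2))` solves
`φ'' = m²φ + aφ³ + (3a²/(16m²))φ⁵` on `I = {η | e^(−2mη+C) > a/2}`, and `φ²` is the
Bose–Einstein distribution when `a = 2`. -/
theorem stmt_18 (m a C : ℝ) (hm : 0 < m) (ha : 0 < a) :
    ∀ η : ℝ, Real.exp (-(2 * m * η) + C) > a / 2 →
      deriv (deriv (fun η =>
          Real.sqrt (2 * m ^ 2 / (Real.exp (-(2 * m * η) + C) - a / 2)))) η
        = m ^ 2 * ((fun η =>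
            Real.sqrt (2 * m ^ 2 / (Real.exp (-(2 * m * η) + C) - a / 2))) η)
          + a * ((fun η =>
            Real.sqrt (2 * m ^ 2 / (Real.exp (-(2 * m * η) + C) - a / 2))) η) ^ 3
          + (3 * a ^ 2 / (16 * m ^ 2)) * ((fun η =>
            Real.sqrt (2 * m ^ 2 / (Real.exp (-(2 * m * η) + C) - a / 2))) η) ^ 5
      ∧ ((fun η =>
            Real.sqrt (2 * m ^ 2 / (Real.exp (-(2 * m * η) + C) - a / 2))) η) ^ 2
          = 2 * m ^ 2 / (Real.exp (-(2 * m * η) + C) - a / 2)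
      ∧ (a = 2 → ((fun η =>
            Real.sqrt (2 * m ^ 2 / (Real.exp (-(2 * m * η) + C) - a / 2))) η) ^ 2
          = 2 * m ^ 2 / (Real.exp (-(2 * m * η) + C) - 1)) :=
  stmt_18_general m a C hm
end

section
/- Let m > 0, b ≠ 0, C, and n be real numbers, and define ρ(η) = (m/b)/(exp(2mη + C) + n). Then at every η with exp(2mη + C) + n ≠ 0, ρ satisfies the first-order ODE ρ'(η) = 2nb·ρ(η)² − 2m·ρ(η). In particular, for n = 1 ρ is the Fermi–Dirac distribution, for n = −1 ρ is the Bose–Einstein distribution, and for n = 0 ρ(η) = (m/b)e^(−2mη−C) is the Maxwell–Boltzmann distribution, so all three quantum statistical distributions arise from the same nonlinear equation with the nonlinear term scaled by n. -/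
/-- `ρ = (m/b)/(e^(2mη+C) + n)` solves `ρ' = 2nbρ² − 2mρ`, unifying
the Fermi–Dirac (`n = 1`), Bose–Einstein (`n = −1`) and Maxwell–Boltzmann (`n = 0`)
distributions; in particular for `n = 0`, `ρ = (m/b) e^(−2mη−C)`. -/
theorem stmt_19 (m b C n : ℝ) (hm : 0 < m) (hb : b ≠ 0) :
    (∀ η : ℝ, Real.exp (2 * m * η + C) + n ≠ 0 →
      deriv (fun η => (m / b) / (Real.exp (2 * m * η + C) + n)) η
        = 2 * n * b * ((fun η => (m / b) / (Real.exp (2 * m * η + C) + n)) η) ^ 2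
          - 2 * m * ((fun η => (m / b) / (Real.exp (2 * m * η + C) + n)) η))
    ∧ (n = 0 → ∀ η : ℝ,
        (m / b) / (Real.exp (2 * m * η + C) + n)
          = (m / b) * Real.exp (-(2 * m * η) - C)) := by
  constructor
  · intro η hη
    have h1 : HasDerivAt (fun η : ℝ => 2 * m * η + C) (2 * m) η := by
      simpa using ((hasDerivAt_id η).const_mul (2 * m)).add_const C
    have h2 : HasDerivAt (fun η : ℝ => Real.exp (2 * m * η + C) + n)
        (Real.exp (2 * m * η + C) * (2 * m)) η := (h1.exp).add_const n
    have h3 : HasDerivAt (fun η : ℝ => (m / b) / (Real.exp (2 * m * η + C) + n))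
        (-(m / b) * (Real.exp (2 * m * η + C) * (2 * m)) /
          (Real.exp (2 * m * η + C) + n) ^ 2) η := by
      simpa [div_eq_mul_inv, mul_comm, mul_assoc, mul_left_comm, neg_mul] using
        (h2.inv hη).const_mul (m / b)
    rw [h3.deriv]
    field_simp
    ring
  · intro hn η
    subst hn
    rw [div_eq_mul_inv, add_zero, ← Real.exp_neg]
    ring_nf
end
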